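/- arXiv:2402.11332 — 9 statements merged into one kernel-verified Lean document; each statement's English description precedes it below -/
import Mathlib

section
/- Let n ≥ 1 and let A : Matrix (Fin n) (Fin n) ℍ. Then A is Toeplitz if and only if there exist vectors x y : Fin n → ℍ such that for all r s : Fin n, (A - S * A * Sᵀ) r s = (if s = 0 then x r else 0) + (if r = 0 then y s else 0), where S : Matrix (Fin n) (Fin n) ℍ is the lower shift matrix defined by S r s = if (r : ℕ) = (s : ℕ) + 1 then 1 else 0. -/
open Matrix

/-- An `n × n` matrix over the real quaternions is Toeplitz if its entries are
constant along diagonals. -/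
def IsToeplitz {n : ℕ} (A : Matrix (Fin n) (Fin n) (Quaternion ℝ)) : Prop :=
  ∀ r s r' s' : Fin n, (r : ℤ) - (s : ℤ) = (r' : ℤ) - (s' : ℤ) → A r s = A r' s'

/-- The lower shift matrix. -/
noncomputable def lowerShift (n : ℕ) : Matrix (Fin n) (Fin n) (Quaternion ℝ) :=
  Matrix.of fun r s => if (r : ℕ) = (s : ℕ) + 1 then 1 else 0

/-! Conjugating by the shift moves every entry one step down its diagonal, so the displacement
`A - S A Sᵀ` is supported on the first row and column exactly when `A (i+1) (j+1) = A i j`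
for all `i, j`; iterating this relation, it says that `A` is constant along diagonals. -/

section Diagonals

variable {α : Type*} {n : ℕ}

theorem apply_add_add_of_apply_succ_succ {A : Matrix (Fin n) (Fin n) α}
    (hA : ∀ i j (hi : i + 1 < n) (hj : j + 1 < n),
      A ⟨i + 1, hi⟩ ⟨j + 1, hj⟩ = A ⟨i, by omega⟩ ⟨j, by omega⟩)
    (k i j : ℕ) (hi : i + k < n) (hj : j + k < n) :
    A ⟨i + k, hi⟩ ⟨j + k, hj⟩ = A ⟨i, by omega⟩ ⟨j, by omega⟩ := by
  induction k with
  | zero => rfl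
  | succ k ih => exact (hA (i + k) (j + k) hi hj).trans (ih (by omega) (by omega))

theorem diagonal_constant_iff_apply_succ_succ (A : Matrix (Fin n) (Fin n) α) :
    (∀ r s r' s' : Fin n, (r : ℤ) - (s : ℤ) = (r' : ℤ) - (s' : ℤ) → A r s = A r' s') ↔
      ∀ i j (hi : i + 1 < n) (hj : j + 1 < n),
        A ⟨i + 1, hi⟩ ⟨j + 1, hj⟩ = A ⟨i, by omega⟩ ⟨j, by omega⟩ := by
  refine ⟨fun hA i j hi hj => hA _ _ _ _ (by push_cast; ring), fun hA => ?_⟩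
  suffices h : ∀ r s r' s' : Fin n, (r : ℕ) ≤ r' → (r : ℤ) - s = (r' : ℤ) - s' →
      A r s = A r' s' by
    intro r s r' s' hrs
    rcases le_total (r : ℕ) r' with hle | hle
    · exact h r s r' s' hle hrs
    · exact (h r' s' r s hle hrs.symm).symm
  rintro ⟨r, hr⟩ ⟨s, hs⟩ ⟨r', hr'⟩ ⟨s', hs'⟩ hle hrs
  obtain ⟨k, rfl⟩ := Nat.exists_eq_add_of_le hle
  obtain rfl : s' = s + k := by simp only at hrs; omega
  exact (apply_add_add_of_apply_succ_succ hA k r s hr' hs').symm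

end Diagonals

theorem exists_border_iff_apply_succ_succ_eq_zero {α : Type*} [AddMonoid α] {n : ℕ}
    (D : Matrix (Fin n) (Fin n) α) :
    (∃ x y : Fin n → α, ∀ r s : Fin n,
      D r s = (if (s : ℕ) = 0 then x r else 0) + (if (r : ℕ) = 0 then y s else 0)) ↔
      ∀ i j (hi : i + 1 < n) (hj : j + 1 < n), D ⟨i + 1, hi⟩ ⟨j + 1, hj⟩ = 0 := by
  constructor
  · rintro ⟨x, y, h⟩ i j hi hj
    simpa using h ⟨i + 1, hi⟩ ⟨j + 1, hj⟩
  · intro h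
    refine ⟨fun r => D r ⟨0, r.pos⟩, fun s => if (s : ℕ) = 0 then 0 else D ⟨0, s.pos⟩ s,
      fun r s => ?_⟩
    rcases r with ⟨_ | i, hi⟩ <;> rcases s with ⟨_ | j, hj⟩ <;> simp [h]

section Shift

variable {n m : ℕ}

theorem lowerShift_mul_apply_succ (B : Matrix (Fin n) (Fin m) (Quaternion ℝ))
    (i : ℕ) (hi : i + 1 < n) (c : Fin m) :
    (lowerShift n * B) ⟨i + 1, hi⟩ c = B ⟨i, by omega⟩ c := by
  rw [mul_apply, Fintype.sum_eq_single ⟨i, by omega⟩]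
  · simp [lowerShift]
  · intro k hk
    simp [lowerShift, Fin.ext_iff] at hk ⊢
    omega

theorem mul_lowerShift_transpose_apply_succ (B : Matrix (Fin m) (Fin n) (Quaternion ℝ))
    (r : Fin m) (j : ℕ) (hj : j + 1 < n) :
    (B * (lowerShift n)ᵀ) r ⟨j + 1, hj⟩ = B r ⟨j, by omega⟩ := by
  rw [mul_apply, Fintype.sum_eq_single ⟨j, by omega⟩]
  · simp [lowerShift]
  · intro k hk
    simp [lowerShift, Fin.ext_iff] at hk ⊢
    omega

theorem lowerShift_conj_apply_succ_succ (A : Matrix (Fin n) (Fin n) (Quaternion ℝ))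
    (i j : ℕ) (hi : i + 1 < n) (hj : j + 1 < n) :
    (lowerShift n * A * (lowerShift n)ᵀ) ⟨i + 1, hi⟩ ⟨j + 1, hj⟩ =
      A ⟨i, by omega⟩ ⟨j, by omega⟩ := by
  rw [mul_lowerShift_transpose_apply_succ, lowerShift_mul_apply_succ]

end Shift

theorem toeplitz_iff_shift_displacement_general (n : ℕ)
    (A : Matrix (Fin n) (Fin n) (Quaternion ℝ)) :
    IsToeplitz A ↔ ∃ x y : Fin n → Quaternion ℝ, ∀ r s : Fin n,
      (A - lowerShift n * A * (lowerShift n)ᵀ) r s =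
        (if (s : ℕ) = 0 then x r else 0) + (if (r : ℕ) = 0 then y s else 0) := by
  rw [IsToeplitz, diagonal_constant_iff_apply_succ_succ, exists_border_iff_apply_succ_succ_eq_zero]
  refine forall₄_congr fun i j hi hj => ?_
  rw [Matrix.sub_apply, lowerShift_conj_apply_succ_succ, sub_eq_zero]

theorem toeplitz_iff_shift_displacement (n : ℕ) (hn : 1 ≤ n)
    (A : Matrix (Fin n) (Fin n) (Quaternion ℝ)) :
    IsToeplitz A ↔ ∃ x y : Fin n → Quaternion ℝ, ∀ r s : Fin n,
      (A - lowerShift n * A * (lowerShift n)ᵀ) r s =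
        (if (s : ℕ) = 0 then x r else 0) + (if (r : ℕ) = 0 then y s else 0) :=
  toeplitz_iff_shift_displacement_general n A
end

section
/- Let n ≥ 1, let a b : ℤ → ℍ, and let A B : Matrix (Fin n) (Fin n) ℍ be the Toeplitz matrices given by A r s = a ((r : ℤ) - s) and B r s = b ((r : ℤ) - s). Then the product A * B is Toeplitz if and only if a r * b (s - n) = a (r - n) * b s for all integers r, s with 1 ≤ r ≤ n - 1 and 1 ≤ s ≤ n - 1. -/
theorem toeplitz_product_iff (n : ℕ) (hn : 1 ≤ n) (a b : ℤ → Quaternion ℝ)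
    (A B : Matrix (Fin n) (Fin n) (Quaternion ℝ))
    (hA : ∀ r s : Fin n, A r s = a ((r : ℤ) - (s : ℤ)))
    (hB : ∀ r s : Fin n, B r s = b ((r : ℤ) - (s : ℤ))) :
    IsToeplitz (A * B) ↔
      ∀ r s : ℤ, 1 ≤ r → r ≤ (n : ℤ) - 1 → 1 ≤ s → s ≤ (n : ℤ) - 1 →
        a r * b (s - n) = a (r - n) * b s := by
  -- entry formula
  have hmul : ∀ (x y : ℕ) (hx : x < n) (hy : y < n),
      (A * B) ⟨x, hx⟩ ⟨y, hy⟩ =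
        ∑ k ∈ Finset.range n, a ((x : ℤ) - k) * b ((k : ℤ) - y) := by
    intro x y hx hy
    rw [Matrix.mul_apply]
    have h : ∀ j : Fin n, A ⟨x, hx⟩ j * B j ⟨y, hy⟩
        = a ((x : ℤ) - ((j : ℕ) : ℤ)) * b (((j : ℕ) : ℤ) - (y : ℤ)) := by
      intro j; rw [hA, hB]
    simp only [h]
    exact Fin.sum_univ_eq_sum_range (fun k => a ((x : ℤ) - k) * b ((k : ℤ) - y)) n
  -- one-step criterion
  have key : ∀ (x y : ℕ) (hx : x + 1 < n) (hy : y + 1 < n),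
      ((A * B) ⟨x + 1, hx⟩ ⟨y + 1, hy⟩ = (A * B) ⟨x, by omega⟩ ⟨y, by omega⟩ ↔
        a ((x : ℤ) + 1) * b (-((y : ℤ) + 1))
          = a ((x : ℤ) - ((n : ℤ) - 1)) * b (((n : ℤ) - 1) - (y : ℤ))) := by
    intro x y hx hy
    obtain ⟨m, rfl⟩ : ∃ m, n = m + 1 := ⟨n - 1, by omega⟩
    rw [hmul, hmul]
    rw [Finset.sum_range_succ' (fun k => a (((x : ℕ) + 1 : ℕ) - (k : ℤ))
        * b ((k : ℤ) - ((y : ℕ) + 1 : ℕ))) m]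
    rw [Finset.sum_range_succ (fun k => a ((x : ℤ) - k) * b ((k : ℤ) - y)) m]
    have hsame : (∑ i ∈ Finset.range m,
          a (((x : ℕ) + 1 : ℕ) - ((i + 1 : ℕ) : ℤ)) * b (((i + 1 : ℕ) : ℤ) - ((y : ℕ) + 1 : ℕ)))
        = ∑ k ∈ Finset.range m, a ((x : ℤ) - k) * b ((k : ℤ) - y) := by
      apply Finset.sum_congr rfl
      intro k _
      congr 2 <;> push_cast <;> ring
    rw [hsame]
    rw [add_right_inj]
    constructor <;> intro h' <;> (convert h' using 2 <;> push_cast <;> ring)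
  constructor
  · -- Toeplitz → relation
    intro hT r s hr1 hr2 hs1 hs2
    have hn2 : 2 ≤ n := by omega
    obtain ⟨p, hp⟩ : ∃ p : ℕ, (p : ℤ) = r - 1 := ⟨(r - 1).toNat, Int.toNat_of_nonneg (by omega)⟩
    obtain ⟨q, hq⟩ : ∃ q : ℕ, (q : ℤ) = (n : ℤ) - 1 - s :=
      ⟨((n : ℤ) - 1 - s).toNat, Int.toNat_of_nonneg (by omega)⟩
    have hp1 : p + 1 < n := by omega
    have hq1 : q + 1 < n := by omega
    have heq := hT ⟨p + 1, hp1⟩ ⟨q + 1, hq1⟩ ⟨p, by omega⟩ ⟨q, by omega⟩ (by push_cast; ring)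
    have h2 := (key p q hp1 hq1).mp heq
    calc a r * b (s - n)
        = a ((p : ℤ) + 1) * b (-((q : ℤ) + 1)) := by congr 1 <;> congr 1 <;> omega
      _ = a ((p : ℤ) - ((n : ℤ) - 1)) * b (((n : ℤ) - 1) - (q : ℤ)) := h2
      _ = a (r - n) * b s := by congr 1 <;> congr 1 <;> omega
  · -- relation → Toeplitz
    intro h
    have step : ∀ (t x y : ℕ) (hx : x + t < n) (hy : y + t < n),
        (A * B) ⟨x + t, hx⟩ ⟨y + t, hy⟩ = (A * B) ⟨x, by omega⟩ ⟨y, by omega⟩ := by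
      intro t
      induction t with
      | zero => intro x y hx hy; rfl
      | succ t ih =>
        intro x y hx hy
        have hx' : (x + t) + 1 < n := by omega
        have hy' : (y + t) + 1 < n := by omega
        have h1 : (A * B) ⟨x + (t + 1), hx⟩ ⟨y + (t + 1), hy⟩
            = (A * B) ⟨(x + t) + 1, hx'⟩ ⟨(y + t) + 1, hy'⟩ := by
          congr 1 <;> · apply Fin.ext; simp; omega
        rw [h1]
        rw [(key (x + t) (y + t) hx' hy').mpr ?_]
        · exact ih x y (by omega) (by omega)
        · have := h ((x : ℤ) + t + 1) ((n : ℤ) - 1 - (y + t)) (by omega) (by push_cast; omega)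
            (by push_cast; omega) (by omega)
          calc a (((x + t : ℕ) : ℤ) + 1) * b (-(((y + t : ℕ) : ℤ) + 1))
              = a ((x : ℤ) + t + 1) * b (((n : ℤ) - 1 - (y + t)) - n) := by
                congr 1 <;> congr 1 <;> push_cast <;> ring
            _ = a (((x : ℤ) + t + 1) - n) * b ((n : ℤ) - 1 - (y + t)) := this
            _ = a (((x + t : ℕ) : ℤ) - ((n : ℤ) - 1)) * b (((n : ℤ) - 1) - ((y + t : ℕ) : ℤ)) := by
                congr 1 <;> congr 1 <;> push_cast <;> ring
    intro r s r' s' hd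
    rcases le_total (r' : ℕ) (r : ℕ) with hle | hle
    · obtain ⟨t, ht⟩ : ∃ t : ℕ, (r : ℕ) = (r' : ℕ) + t := ⟨(r : ℕ) - r', by omega⟩
      have hs : (s : ℕ) = (s' : ℕ) + t := by omega
      have := step t r' s' (by omega) (by omega)
      convert this using 2 <;> (apply Fin.ext; simp only [Fin.val_mk]; omega)
    · obtain ⟨t, ht⟩ : ∃ t : ℕ, (r' : ℕ) = (r : ℕ) + t := ⟨(r' : ℕ) - r, by omega⟩
      have hs : (s' : ℕ) = (s : ℕ) + t := by omega
      have := (step t r s (by omega) (by omega)).symm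
      convert this using 2 <;> (apply Fin.ext; simp only [Fin.val_mk]; omega)
end

section
/- For every n ≥ 3 there exist Toeplitz matrices A B : Matrix (Fin n) (Fin n) ℍ such that A * B = B * A but A * B is not Toeplitz. (For instance, A with a (n-1) = a (1-n) = 1 and 0 elsewhere, and B with b (n-1) = b (1-n) = Quaternion.imK ('k') and 0 elsewhere, work.) -/
/-!
Take `A = E₀ₘ + Eₘ₀` and `B = k • A`, supported on the two extreme diagonals `±(n - 1)`, which
each consist of a single corner entry, so both are Toeplitz. Their products in either order are
`k • (E₀₀ + Eₘₘ)`, whose main diagonal `k, 0, …, 0, k` is not constant as soon as `n ≥ 3`.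
-/

theorem IsToeplitz.apply_self_eq_apply_self {n : ℕ} {A : Matrix (Fin n) (Fin n) (Quaternion ℝ)}
    (hA : IsToeplitz A) (i j : Fin n) : A i i = A j j :=
  hA i i j j (by rw [sub_self, sub_self])

namespace Matrix

variable {α : Type*}

def corners [AddZeroClass α] (n : ℕ) (c : α) : Matrix (Fin (n + 1)) (Fin (n + 1)) α :=
  single (0 : Fin (n + 1)) (Fin.last n) c + single (Fin.last n) (0 : Fin (n + 1)) c

theorem corners_apply [AddZeroClass α] {n : ℕ} [NeZero n] (c : α) (r s : Fin (n + 1)) :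
    corners n c r s = if (r : ℤ) - s = -n ∨ (r : ℤ) - s = n then c else 0 := by
  have hr := r.isLt
  have hs := s.isLt
  by_cases h₀ : 0 = r ∧ Fin.last n = s
  · obtain ⟨rfl, rfl⟩ := h₀
    simp [corners, single_apply_of_row_ne (Fin.last_pos'.ne' : Fin.last n ≠ 0)]
  by_cases hₘ : Fin.last n = r ∧ 0 = s
  · obtain ⟨rfl, rfl⟩ := hₘ
    simp [corners, single_apply_of_row_ne (Fin.last_pos'.ne : 0 ≠ Fin.last n)]
  rw [corners, Matrix.add_apply, single_apply_of_ne _ _ _ _ _ h₀,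
    single_apply_of_ne _ _ _ _ _ hₘ, add_zero, if_neg]
  simp only [Fin.ext_iff, Fin.val_last, Fin.val_zero] at h₀ hₘ
  omega

theorem isToeplitz_corners {n : ℕ} [NeZero n] (c : Quaternion ℝ) : IsToeplitz (corners n c) :=
  fun r s r' s' h ↦ by rw [corners_apply, corners_apply, h]

theorem corners_mul_corners [NonUnitalNonAssocSemiring α] {n : ℕ} [NeZero n] (a b : α) :
    corners n a * corners n b = single 0 0 (a * b) + single (Fin.last n) (Fin.last n) (a * b) := by
  have h : (0 : Fin (n + 1)) ≠ Fin.last n := (Fin.last_pos' (n := n)).ne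
  rw [corners, corners, add_mul, mul_add, mul_add, single_mul_single_same,
    single_mul_single_same, single_mul_single_of_ne _ _ _ _ h.symm,
    single_mul_single_of_ne _ _ _ _ h, zero_add, add_zero]

theorem not_isToeplitz_single_zero_add_single_last {n : ℕ} (hn : 2 ≤ n) {c : Quaternion ℝ}
    (hc : c ≠ 0) : ¬ IsToeplitz (single 0 0 c + single (Fin.last n) (Fin.last n) c) := by
  intro h
  have h₀ₙ : (0 : Fin (n + 1)) ≠ Fin.last n := by simp [Fin.ext_iff]; omega
  have h₀₁ : (0 : Fin (n + 1)) ≠ ⟨1, by omega⟩ := by simp [Fin.ext_iff]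
  have h₁ₙ : (⟨1, by omega⟩ : Fin (n + 1)) ≠ Fin.last n := by simp [Fin.ext_iff]; omega
  have hdiag := h.apply_self_eq_apply_self 0 ⟨1, by omega⟩
  rw [Matrix.add_apply, Matrix.add_apply, single_apply_same, single_apply_of_row_ne h₀ₙ.symm,
    single_apply_of_row_ne h₀₁, single_apply_of_row_ne h₁ₙ.symm, add_zero, add_zero] at hdiag
  exact hc hdiag

end Matrix

open Matrix in
theorem exists_commuting_toeplitz_product_not_toeplitz (n : ℕ) (hn : 3 ≤ n) :
    ∃ A B : Matrix (Fin n) (Fin n) (Quaternion ℝ),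
      IsToeplitz A ∧ IsToeplitz B ∧ A * B = B * A ∧ ¬ IsToeplitz (A * B) := by
  obtain ⟨m, rfl⟩ : ∃ m, n = m + 1 := ⟨n - 1, by omega⟩
  have : NeZero m := ⟨by omega⟩
  set k : Quaternion ℝ := ⟨0, 0, 0, 1⟩
  refine ⟨corners m 1, corners m k, isToeplitz_corners 1, isToeplitz_corners k,
    by rw [corners_mul_corners, corners_mul_corners, one_mul, mul_one], fun h ↦ ?_⟩
  rw [corners_mul_corners, one_mul] at h
  exact not_isToeplitz_single_zero_add_single_last (by omega)
    (fun hk ↦ one_ne_zero (congrArg QuaternionAlgebra.imK hk)) h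
end

section
/- Let n ≥ 1, let 𝒜 be a subalgebra of the ℝ-algebra ℍ, and let p q : ℍ satisfy p * x = x * p and q * x = x * q for all x ∈ 𝒜, with ¬(p = 0 ∧ q = 0). Let a b : ℤ → ℍ satisfy: a t ∈ 𝒜 and b t ∈ 𝒜 for all t ∈ ℤ; p * a (t - n) = q * a t and p * b (t - n) = q * b t for every integer t with 1 ≤ t ≤ n - 1. Let A B : Matrix (Fin n) (Fin n) ℍ be given by A r s = a ((r : ℤ) - s) and B r s = b ((r : ℤ) - s). Then there exists c : ℤ → ℍ such that (A * B) r s = c ((r : ℤ) - s) for all r, s (so A * B is Toeplitz), c t ∈ 𝒜 for all t ∈ ℤ, and p * c (t - n) = q * c t for every integer t with 1 ≤ t ≤ n - 1. -/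
theorem Gpq_closed_under_mul (n : ℕ) (hn : 1 ≤ n)
    (𝒜 : Subalgebra ℝ (Quaternion ℝ)) (p q : Quaternion ℝ)
    (hp : ∀ x ∈ 𝒜, p * x = x * p) (hq : ∀ x ∈ 𝒜, q * x = x * q)
    (hpq : ¬ (p = 0 ∧ q = 0))
    (a b : ℤ → Quaternion ℝ)
    (ha𝒜 : ∀ t : ℤ, a t ∈ 𝒜) (hb𝒜 : ∀ t : ℤ, b t ∈ 𝒜)
    (ha : ∀ t : ℤ, 1 ≤ t → t ≤ (n : ℤ) - 1 → p * a (t - n) = q * a t)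
    (hb : ∀ t : ℤ, 1 ≤ t → t ≤ (n : ℤ) - 1 → p * b (t - n) = q * b t)
    (A B : Matrix (Fin n) (Fin n) (Quaternion ℝ))
    (hA : ∀ r s : Fin n, A r s = a ((r : ℤ) - (s : ℤ)))
    (hB : ∀ r s : Fin n, B r s = b ((r : ℤ) - (s : ℤ))) :
    ∃ c : ℤ → Quaternion ℝ,
      (∀ r s : Fin n, (A * B) r s = c ((r : ℤ) - (s : ℤ))) ∧
      (∀ t : ℤ, c t ∈ 𝒜) ∧
      (∀ t : ℤ, 1 ≤ t → t ≤ (n : ℤ) - 1 → p * c (t - n) = q * c t) := by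
  classical
  haveI : NeZero n := ⟨by omega⟩
  have hpq' : p ≠ 0 ∨ q ≠ 0 := by tauto
  have cancel : ∀ x y : Quaternion ℝ, p * x = p * y → q * x = q * y → x = y := by
    intro x y h1 h2
    rcases hpq' with h | h
    · exact mul_left_cancel₀ h h1
    · exact mul_left_cancel₀ h h2
  have modval : ∀ c x : Fin n,
      ((c + x : Fin n) : ℤ) = if (c:ℕ) + (x:ℕ) < n then (c:ℤ) + x else (c:ℤ) + x - n := by
    intro c x
    have hc := c.isLt; have hx := x.isLt
    have hv : ((c + x : Fin n) : ℕ) = ((c:ℕ) + x) % n := Fin.val_add c x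
    split_ifs with h
    · rw [Nat.mod_eq_of_lt h] at hv; omega
    · rw [Nat.mod_eq_sub_mod (by omega), Nat.mod_eq_of_lt (by omega)] at hv; omega
  -- the key swap lemma
  have swap : ∀ u v : ℤ, 1 ≤ u → u ≤ (n:ℤ) - 1 → 1 ≤ v → v ≤ (n:ℤ) - 1 →
      a u * b (v - n) = a (u - n) * b v := by
    intro u v hu1 hu2 hv1 hv2
    apply cancel
    · calc p * (a u * b (v - n)) = a u * p * b (v - n) := by
            rw [← mul_assoc, hp _ (ha𝒜 u)]
        _ = a u * (q * b v) := by rw [mul_assoc, hb v hv1 hv2]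
        _ = q * a u * b v := by rw [← mul_assoc, ← hq _ (ha𝒜 u)]
        _ = p * (a (u - n) * b v) := by rw [← ha u hu1 hu2, mul_assoc]
    · calc q * (a u * b (v - n)) = q * a u * b (v - n) := by rw [mul_assoc]
        _ = a (u - n) * p * b (v - n) := by rw [← ha u hu1 hu2, ← hp _ (ha𝒜 (u - n))]
        _ = a (u - n) * (q * b v) := by rw [mul_assoc, hb v hv1 hv2]
        _ = q * (a (u - n) * b v) := by rw [← mul_assoc, ← hq _ (ha𝒜 (u - n)), mul_assoc]
  -- shift invariance of the convolution sum
  have step : ∀ r s : ℤ, 0 ≤ r → r ≤ (n:ℤ) - 2 → 0 ≤ s → s ≤ (n:ℤ) - 2 →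
      (∑ k : Fin n, a (r - (k:ℤ)) * b ((k:ℤ) - s)) =
      ∑ k : Fin n, a (r + 1 - (k:ℤ)) * b ((k:ℤ) - (s + 1)) := by
    intro r s hr0 hr1 hs0 hs1
    have hn2 : 2 ≤ n := by omega
    have hone : ((1 : Fin n) : ℕ) = 1 := by
      rw [Fin.val_one']; exact Nat.mod_eq_of_lt hn2
    refine Fintype.sum_equiv (Equiv.addLeft (1 : Fin n)) _ _ ?_
    intro x
    have hx := x.isLt
    have he : ((Equiv.addLeft (1 : Fin n)) x : Fin n) = 1 + x := rfl
    rw [he, modval 1 x]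
    simp only [hone, Nat.cast_one]
    split_ifs with h
    · rw [show r + 1 - (1 + (x:ℤ)) = r - (x:ℤ) from by ring,
        show 1 + (x:ℤ) - (s + 1) = (x:ℤ) - s from by ring]
    · have hxn : ((x:ℕ):ℤ) = (n:ℤ) - 1 := by omega
      rw [hxn,
        show r + 1 - ((1:ℤ) + ((n:ℤ) - 1) - (n:ℤ)) = r + 1 from by ring,
        show (1:ℤ) + ((n:ℤ) - 1) - (n:ℤ) - (s + 1) = (n:ℤ) - 1 - s - (n:ℤ) from by ring,
        show r - ((n:ℤ) - 1) = r + 1 - (n:ℤ) from by ring]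
      exact (swap (r + 1) ((n:ℤ) - 1 - s) (by omega) (by omega) (by omega) (by omega)).symm
  -- the Toeplitz symbol of the product
  set c : ℤ → Quaternion ℝ := fun t =>
    if 0 ≤ t then ∑ k : Fin n, a (t - (k:ℤ)) * b ((k:ℤ) - 0)
    else ∑ k : Fin n, a (0 - (k:ℤ)) * b ((k:ℤ) - (-t)) with hc
  have aux : ∀ m : ℕ, ∀ r s : ℤ, 0 ≤ r → r < n → 0 ≤ s → s < n → min r s = m →
      (∑ k : Fin n, a (r - (k:ℤ)) * b ((k:ℤ) - s)) = c (r - s) := by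
    intro m
    induction m with
    | zero =>
      intro r s hr0 hr1 hs0 hs1 hmin
      simp only [hc]
      by_cases h0 : 0 ≤ r - s
      · rw [if_pos h0]
        have hs' : s = 0 := by omega
        subst hs'
        exact Finset.sum_congr rfl fun k _ => by
          rw [show r - 0 = r from by ring]
      · rw [if_neg h0]
        have hr' : r = 0 := by omega
        subst hr'
        exact Finset.sum_congr rfl fun k _ => by
          rw [show -(0 - s) = s from by ring]
    | succ m ih =>
      intro r s hr0 hr1 hs0 hs1 hmin
      have h1 : (∑ k : Fin n, a ((r - 1) - (k:ℤ)) * b ((k:ℤ) - (s - 1))) =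
          ∑ k : Fin n, a ((r - 1) + 1 - (k:ℤ)) * b ((k:ℤ) - ((s - 1) + 1)) :=
        step (r - 1) (s - 1) (by omega) (by omega) (by omega) (by omega)
      have h2 := ih (r - 1) (s - 1) (by omega) (by omega) (by omega) (by omega) (by omega)
      have h3 : (∑ k : Fin n, a (r - (k:ℤ)) * b ((k:ℤ) - s)) =
          ∑ k : Fin n, a ((r - 1) + 1 - (k:ℤ)) * b ((k:ℤ) - ((s - 1) + 1)) := by
        refine Finset.sum_congr rfl fun k _ => ?_
        rw [show (r - 1) + 1 - (k:ℤ) = r - (k:ℤ) from by ring,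
          show (s - 1) + 1 = s from by ring]
      rw [h3, ← h1, h2, show r - 1 - (s - 1) = r - s from by ring]
  refine ⟨c, ?_, ?_, ?_⟩
  · intro r s
    rw [Matrix.mul_apply]
    have hr := r.isLt; have hs := s.isLt
    have hsum : (∑ k : Fin n, A r k * B k s) =
        ∑ k : Fin n, a ((r:ℤ) - (k:ℤ)) * b ((k:ℤ) - (s:ℤ)) := by
      refine Finset.sum_congr rfl fun k _ => ?_
      rw [hA, hB]
    rw [hsum]
    exact aux (min (r:ℕ) (s:ℕ)) (r:ℤ) (s:ℤ) (by omega) (by omega) (by omega) (by omega)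
      (by omega)
  · intro t
    simp only [hc]
    split_ifs <;> exact Subalgebra.sum_mem _ fun k _ => mul_mem (ha𝒜 _) (hb𝒜 _)
  · intro t ht1 ht2
    have hct : c t = ∑ k : Fin n, a (t - (k:ℤ)) * b ((k:ℤ) - 0) := by
      simp only [hc]; rw [if_pos (show (0:ℤ) ≤ t by omega)]
    have hctn : c (t - n) = ∑ k : Fin n, a (0 - (k:ℤ)) * b ((k:ℤ) - (-(t - (n:ℤ)))) := by
      simp only [hc]; rw [if_neg (show ¬ (0:ℤ) ≤ t - n by omega)]
    rw [hct, hctn, Finset.mul_sum, Finset.mul_sum]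
    set tf : Fin n := ⟨t.toNat, by omega⟩ with htf
    have hval : (tf : ℕ) = t.toNat := rfl
    have htfv : ((tf : ℕ) : ℤ) = t := by rw [hval]; omega
    refine Fintype.sum_equiv (Equiv.addLeft tf) _ _ ?_
    intro x
    have hx := x.isLt
    have he : ((Equiv.addLeft tf) x : Fin n) = tf + x := rfl
    rw [he, modval tf x]
    split_ifs with h
    · -- wrapped index: t + x < n
      have hbx := hb (t + (x:ℤ)) (by omega) (by omega)
      rw [htfv,
        show (x:ℤ) - -(t - (n:ℤ)) = t + (x:ℤ) - (n:ℤ) from by ring,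
        show t - (t + (x:ℤ)) = 0 - (x:ℤ) from by ring,
        show t + (x:ℤ) - 0 = t + (x:ℤ) from by ring,
        ← mul_assoc, hp _ (ha𝒜 (0 - (x:ℤ))), mul_assoc, hbx,
        ← mul_assoc, ← hq _ (ha𝒜 (0 - (x:ℤ))), mul_assoc]
    · have hx1 : 1 ≤ (n:ℤ) - (x:ℤ) := by omega
      have hx2 : (n:ℤ) - (x:ℤ) ≤ (n:ℤ) - 1 := by omega
      have hax := ha ((n:ℤ) - (x:ℤ)) hx1 hx2
      rw [htfv,
        show (x:ℤ) - -(t - (n:ℤ)) = t + (x:ℤ) - (n:ℤ) from by ring,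
        show t - (t + (x:ℤ) - (n:ℤ)) = (n:ℤ) - (x:ℤ) from by ring,
        show t + (x:ℤ) - (n:ℤ) - 0 = t + (x:ℤ) - (n:ℤ) from by ring,
        show (0:ℤ) - (x:ℤ) = (n:ℤ) - (x:ℤ) - (n:ℤ) from by ring,
        ← mul_assoc, hax, mul_assoc]
end

section
/- Let n ≥ 1, let 𝒜 be a commutative subalgebra of the ℝ-algebra ℍ (i.e., x * y = y * x for all x, y ∈ 𝒜), and let p q : ℍ satisfy p * x = x * p and q * x = x * q for all x ∈ 𝒜, with ¬(p = 0 ∧ q = 0). Let a b : ℤ → ℍ satisfy: a t ∈ 𝒜 and b t ∈ 𝒜 for all t ∈ ℤ; p * a (t - n) = q * a t and p * b (t - n) = q * b t for every integer t with 1 ≤ t ≤ n - 1. Let A B : Matrix (Fin n) (Fin n) ℍ be given by A r s = a ((r : ℤ) - s) and B r s = b ((r : ℤ) - s). Then A * B = B * A. -/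
/-! Reindexing `(B * A) r s = ∑ₘ b (r - m) * a (m - s)` by `m = r + s - k` in `Fin n` matches
its terms with those of `(A * B) r s = ∑ₖ a (r - k) * b (k - s)`, after commuting `a` and `b`
inside `𝒜`. When `r + s - k` wraps around modulo `n` the indices are off by `±n`, and the
relations `p * a (t - n) = q * a t`, `p * b (t - n) = q * b t` move that shift from `a` to `b`. -/

-- If `p * q ≠ 0`, cancel it from `p * q * (α' * β') = p * q * (α * β)`; otherwise both sides vanish.
theorem mul_eq_mul_of_mul_eq_mul_of_commute {D : Type*} [Ring D] [NoZeroDivisors D]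
    {p q α α' β β' : D} (hpq : ¬(p = 0 ∧ q = 0)) (hpα : Commute p α) (hqα : Commute q α)
    (hα : p * α = q * α') (hβ : p * β' = q * β) :
    α * β = α' * β' := by
  by_cases hp : p = 0
  · have hq : q ≠ 0 := fun hq => hpq ⟨hp, hq⟩
    subst hp
    have hα' : α' = 0 := by simpa [hq] using hα.symm
    have hβ₀ : β = 0 := by simpa [hq] using hβ.symm
    simp [hα', hβ₀]
  by_cases hq : q = 0
  · subst hq
    have hα₀ : α = 0 := by simpa [hp] using hα
    have hβ' : β' = 0 := by simpa [hp] using hβ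
    simp [hα₀, hβ']
  refine (mul_left_cancel₀ (mul_ne_zero hp hq) ?_).symm
  calc p * q * (α' * β') = p * (p * α) * β' := by rw [hα]; simp only [mul_assoc]
    _ = p * α * (p * β') := by simp only [mul_assoc, hpα.left_comm β']
    _ = p * q * (α * β) := by rw [hβ]; simp only [mul_assoc, hqα.left_comm β]

theorem Fin.intCast_add_eq_or_of_add_eq {n : ℕ} {k m r s : Fin n} (h : k + m = r + s) :
    (k + m : ℤ) = r + s ∨ (k + m : ℤ) = r + s + n ∨ (k + m : ℤ) = r + s - n := by
  have hval := congrArg Fin.val h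
  rw [Fin.val_add_eq_ite, Fin.val_add_eq_ite] at hval
  split_ifs at hval <;> omega

section Toeplitz

variable {R : Type*} [Ring R] {n : ℕ} {a b : ℤ → R}

theorem toeplitz_mul_term_eq_of_add_eq
    (hwrap : ∀ u v : ℤ, -n < u → u < 0 → 0 < v → v < n → a u * b v = a (u + n) * b (v - n))
    {r s k m : Fin n} (hkm : k + m = r + s) :
    a (r - k) * b (k - s) = a (m - s) * b (r - m) := by
  have := r.isLt; have := s.isLt; have := k.isLt; have := m.isLt
  rcases Fin.intCast_add_eq_or_of_add_eq hkm with h | h | h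
  · rw [show (m : ℤ) - s = r - k by omega, show (r : ℤ) - m = k - s by omega]
  · rw [show (m : ℤ) - s = r - k + n by omega, show (r : ℤ) - m = k - s - n by omega]
    exact hwrap _ _ (by omega) (by omega) (by omega) (by omega)
  · rw [show (r : ℤ) - k = m - s + n by omega, show (k : ℤ) - s = r - m - n by omega]
    exact (hwrap _ _ (by omega) (by omega) (by omega) (by omega)).symm

theorem toeplitz_mul_comm
    (hcomm : ∀ u v : ℤ, a u * b v = b v * a u)
    (hwrap : ∀ u v : ℤ, -n < u → u < 0 → 0 < v → v < n → a u * b v = a (u + n) * b (v - n))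
    {A B : Matrix (Fin n) (Fin n) R}
    (hA : ∀ r s : Fin n, A r s = a (r - s)) (hB : ∀ r s : Fin n, B r s = b (r - s)) :
    A * B = B * A := by
  rcases n.eq_zero_or_pos with rfl | hn
  · exact Subsingleton.elim _ _
  have : NeZero n := NeZero.of_pos hn
  ext r s
  simp only [Matrix.mul_apply, hA, hB, ← hcomm]
  exact Fintype.sum_equiv (Equiv.subLeft (r + s)) _ _ fun k =>
    toeplitz_mul_term_eq_of_add_eq hwrap (add_sub_cancel k (r + s))

end Toeplitz

theorem Gpq_commutative_of_commutative_subalgebra_general (n : ℕ)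
    (𝒜 : Subalgebra ℝ (Quaternion ℝ))
    (hcomm : ∀ x ∈ 𝒜, ∀ y ∈ 𝒜, x * y = y * x)
    (p q : Quaternion ℝ)
    (hp : ∀ x ∈ 𝒜, p * x = x * p) (hq : ∀ x ∈ 𝒜, q * x = x * q)
    (hpq : ¬ (p = 0 ∧ q = 0))
    (a b : ℤ → Quaternion ℝ)
    (ha𝒜 : ∀ t : ℤ, a t ∈ 𝒜) (hb𝒜 : ∀ t : ℤ, b t ∈ 𝒜)
    (ha : ∀ t : ℤ, 1 ≤ t → t ≤ (n : ℤ) - 1 → p * a (t - n) = q * a t)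
    (hb : ∀ t : ℤ, 1 ≤ t → t ≤ (n : ℤ) - 1 → p * b (t - n) = q * b t)
    (A B : Matrix (Fin n) (Fin n) (Quaternion ℝ))
    (hA : ∀ r s : Fin n, A r s = a ((r : ℤ) - (s : ℤ)))
    (hB : ∀ r s : Fin n, B r s = b ((r : ℤ) - (s : ℤ))) :
    A * B = B * A := by
  refine toeplitz_mul_comm (fun u v => hcomm _ (ha𝒜 u) _ (hb𝒜 v)) ?_ hA hB
  intro u v hu₁ hu₂ hv₁ hv₂
  have hau : p * a u = q * a (u + n) := by
    simpa using ha (u + n) (by omega) (by omega)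
  exact mul_eq_mul_of_mul_eq_mul_of_commute hpq (hp _ (ha𝒜 u)) (hq _ (ha𝒜 u)) hau
    (hb v (by omega) (by omega))

theorem Gpq_commutative_of_commutative_subalgebra (n : ℕ) (hn : 1 ≤ n)
    (𝒜 : Subalgebra ℝ (Quaternion ℝ))
    (hcomm : ∀ x ∈ 𝒜, ∀ y ∈ 𝒜, x * y = y * x)
    (p q : Quaternion ℝ)
    (hp : ∀ x ∈ 𝒜, p * x = x * p) (hq : ∀ x ∈ 𝒜, q * x = x * q)
    (hpq : ¬ (p = 0 ∧ q = 0))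
    (a b : ℤ → Quaternion ℝ)
    (ha𝒜 : ∀ t : ℤ, a t ∈ 𝒜) (hb𝒜 : ∀ t : ℤ, b t ∈ 𝒜)
    (ha : ∀ t : ℤ, 1 ≤ t → t ≤ (n : ℤ) - 1 → p * a (t - n) = q * a t)
    (hb : ∀ t : ℤ, 1 ≤ t → t ≤ (n : ℤ) - 1 → p * b (t - n) = q * b t)
    (A B : Matrix (Fin n) (Fin n) (Quaternion ℝ))
    (hA : ∀ r s : Fin n, A r s = a ((r : ℤ) - (s : ℤ)))
    (hB : ∀ r s : Fin n, B r s = b ((r : ℤ) - (s : ℤ))) :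
    A * B = B * A :=
  Gpq_commutative_of_commutative_subalgebra_general n 𝒜 hcomm p q hp hq hpq a b ha𝒜 hb𝒜 ha hb A B hA
    hB
end

section
/- Let n ≥ 1, let 𝒜 be a subalgebra of the ℝ-algebra ℍ, and let p, q, p̆, q̆ ∈ 𝒜 each satisfy x * p = p * x, x * q = q * x, x * p̆ = p̆ * x, x * q̆ = q̆ * x for all x ∈ 𝒜, with ¬(p = 0 ∧ q = 0) and ¬(p̆ = 0 ∧ q̆ = 0). If p * q̆ = p̆ * q, then 𝒢_{p,q}[𝒜] = 𝒢_{p̆,q̆}[𝒜] as subsets of Matrix (Fin n) (Fin n) ℍ. -/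
/-- The family `𝒢_{p,q}[𝒜]` of quaternion Toeplitz matrices `A r s = a (r - s)`
with `a t ∈ 𝒜` for all `t` and `p * a (t - n) = q * a t` for `1 ≤ t ≤ n - 1`. -/
def Gpq (n : ℕ) (𝒜 : Subalgebra ℝ (Quaternion ℝ)) (p q : Quaternion ℝ) :
    Set (Matrix (Fin n) (Fin n) (Quaternion ℝ)) :=
  {A | ∃ a : ℤ → Quaternion ℝ,
    (∀ r s : Fin n, A r s = a ((r : ℤ) - (s : ℤ))) ∧
    (∀ t : ℤ, a t ∈ 𝒜) ∧
    (∀ t : ℤ, 1 ≤ t → t ≤ (n : ℤ) - 1 → p * a (t - n) = q * a t)}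

lemma key_transfer (p q p' q' x y : Quaternion ℝ) (hcomm : p * p' = p' * p)
    (hpq : ¬ (p = 0 ∧ q = 0)) (hcross : p * q' = p' * q)
    (h : p * x = q * y) : p' * x = q' * y := by
  by_cases hp0 : p = 0
  · have hq0 : q ≠ 0 := fun hq0 => hpq ⟨hp0, hq0⟩
    subst hp0
    have hy : y = 0 := by
      rw [zero_mul] at h
      rcases mul_eq_zero.mp h.symm with h' | h'
      · exact absurd h' hq0
      · exact h'
    have hp'0 : p' = 0 := by
      rcases mul_eq_zero.mp (show p' * q = 0 by rw [← hcross, zero_mul]) with h' | h'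
      · exact h'
      · exact absurd h' hq0
    simp [hy, hp'0]
  · apply mul_left_cancel₀ hp0
    rw [← mul_assoc, hcomm, mul_assoc, h, ← mul_assoc, ← hcross, mul_assoc]

theorem Gpq_eq_of_cross_relation (n : ℕ) (hn : 1 ≤ n)
    (𝒜 : Subalgebra ℝ (Quaternion ℝ)) (p q p' q' : Quaternion ℝ)
    (hp𝒜 : p ∈ 𝒜) (hq𝒜 : q ∈ 𝒜) (hp'𝒜 : p' ∈ 𝒜) (hq'𝒜 : q' ∈ 𝒜)
    (hp : ∀ x ∈ 𝒜, x * p = p * x) (hq : ∀ x ∈ 𝒜, x * q = q * x)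
    (hp' : ∀ x ∈ 𝒜, x * p' = p' * x) (hq' : ∀ x ∈ 𝒜, x * q' = q' * x)
    (hpq : ¬ (p = 0 ∧ q = 0)) (hpq' : ¬ (p' = 0 ∧ q' = 0))
    (hcross : p * q' = p' * q) :
    Gpq n 𝒜 p q = Gpq n 𝒜 p' q' := by
  have hcomm : p * p' = p' * p := hp' p hp𝒜
  ext A
  constructor
  · rintro ⟨a, hA, hmem, hrel⟩
    exact ⟨a, hA, hmem, fun t h1 h2 =>
      key_transfer p q p' q' _ _ hcomm hpq hcross (hrel t h1 h2)⟩
  · rintro ⟨a, hA, hmem, hrel⟩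
    exact ⟨a, hA, hmem, fun t h1 h2 =>
      key_transfer p' q' p q _ _ hcomm.symm hpq' hcross.symm (hrel t h1 h2)⟩
end

section
/- Let n ≥ 2, let 𝒜 be a subalgebra of the ℝ-algebra ℍ, and let p, q, p̆, q̆ ∈ 𝒜 each satisfy x * p = p * x, x * q = q * x, x * p̆ = p̆ * x, x * q̆ = q̆ * x for all x ∈ 𝒜, with ¬(p = 0 ∧ q = 0) and ¬(p̆ = 0 ∧ q̆ = 0). If 𝒢_{p,q}[𝒜] = 𝒢_{p̆,q̆}[𝒜] as subsets of Matrix (Fin n) (Fin n) ℍ, then p * q̆ = p̆ * q. -/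
theorem cross_relation_of_Gpq_eq (n : ℕ) (hn : 2 ≤ n)
    (𝒜 : Subalgebra ℝ (Quaternion ℝ)) (p q p' q' : Quaternion ℝ)
    (hp𝒜 : p ∈ 𝒜) (hq𝒜 : q ∈ 𝒜) (hp'𝒜 : p' ∈ 𝒜) (hq'𝒜 : q' ∈ 𝒜)
    (hp : ∀ x ∈ 𝒜, x * p = p * x) (hq : ∀ x ∈ 𝒜, x * q = q * x)
    (hp' : ∀ x ∈ 𝒜, x * p' = p' * x) (hq' : ∀ x ∈ 𝒜, x * q' = q' * x)
    (hpq : ¬ (p = 0 ∧ q = 0)) (hpq' : ¬ (p' = 0 ∧ q' = 0))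
    (heq : Gpq n 𝒜 p q = Gpq n 𝒜 p' q') :
    p * q' = p' * q := by
  set a : ℤ → Quaternion ℝ :=
    fun t => if t = 1 then p' else if t = 1 - (n : ℤ) then q' else 0 with ha
  have hmem : (Matrix.of fun r s : Fin n => a ((r : ℤ) - (s : ℤ))) ∈ Gpq n 𝒜 p' q' := by
    refine ⟨a, fun r s => rfl, ?_, ?_⟩
    · intro t
      simp only [ha]
      split_ifs
      · exact hp'𝒜
      · exact hq'𝒜
      · exact 𝒜.zero_mem
    · intro t ht1 ht2
      by_cases h : t = 1
      · subst h
        simp only [ha]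
        split_ifs <;> first | exact hq' p' hp'𝒜 | omega
      · simp only [ha]
        split_ifs <;> first | rw [mul_zero, mul_zero] | omega
  rw [← heq] at hmem
  obtain ⟨b, hb, hb𝒜, hrel⟩ := hmem
  have h1 : b 1 = p' := by
    have h := hb ⟨1, by omega⟩ ⟨0, by omega⟩
    simp only [Matrix.of_apply] at h
    norm_num at h
    rw [← h, ha]
    simp
  have h2 : b (1 - (n : ℤ)) = q' := by
    have h := hb ⟨0, by omega⟩ ⟨n - 1, by omega⟩
    simp only [Matrix.of_apply] at h
    have hc' : ((⟨0, by omega⟩ : Fin n) : ℤ) - ((⟨n - 1, by omega⟩ : Fin n) : ℤ) = 1 - n := by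
      simp only [Fin.val_mk]
      omega
    rw [hc'] at h
    rw [← h, ha]
    simp only
    split_ifs with hx
    · omega
    · rfl
  have hkey := hrel 1 le_rfl (by omega)
  rw [h1, h2] at hkey
  rw [hkey]
  exact (hq p' hp'𝒜).symm
end

section
/- Let n ≥ 2, let 𝒜 be a subalgebra of the ℝ-algebra ℍ, and let p, q ∈ 𝒜 with ¬(p = 0 ∧ q = 0). Assume the centralizer condition: {x : ℍ | x * p = p * x ∧ x * q = q * x} = ↑𝒜 (as sets). Let 𝒢 be any set of matrices in Matrix (Fin n) (Fin n) ℍ such that: every G ∈ 𝒢 is Toeplitz with all entries in 𝒜; 𝒢 is closed under matrix multiplication; and 𝒢_{p,q}[𝒜] ⊆ 𝒢. Then 𝒢 = 𝒢_{p,q}[𝒜]. (That is, 𝒢_{p,q}[𝒜] is a maximal left algebra among the algebras of Toeplitz matrices with entries in 𝒜.) -/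
theorem Gpq_maximal (n : ℕ) (hn : 2 ≤ n)
    (𝒜 : Subalgebra ℝ (Quaternion ℝ)) (p q : Quaternion ℝ)
    (hp𝒜 : p ∈ 𝒜) (hq𝒜 : q ∈ 𝒜) (hpq : ¬ (p = 0 ∧ q = 0))
    (hcentral : {x : Quaternion ℝ | x * p = p * x ∧ x * q = q * x} =
      (𝒜 : Set (Quaternion ℝ)))
    (𝒢 : Set (Matrix (Fin n) (Fin n) (Quaternion ℝ)))
    (h𝒢toep : ∀ G ∈ 𝒢, (∃ g : ℤ → Quaternion ℝ,
      ∀ r s : Fin n, G r s = g ((r : ℤ) - (s : ℤ))) ∧ ∀ r s : Fin n, G r s ∈ 𝒜)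
    (h𝒢mul : ∀ G₁ ∈ 𝒢, ∀ G₂ ∈ 𝒢, G₁ * G₂ ∈ 𝒢)
    (hsub : Gpq n 𝒜 p q ⊆ 𝒢) :
    𝒢 = Gpq n 𝒜 p q := by
  refine Set.Subset.antisymm ?_ hsub
  intro G hG
  obtain ⟨⟨g, hg⟩, hmemA⟩ := h𝒢toep G hG
  have hcomm : q * p = p * q := by
    have hq' : q ∈ {x : Quaternion ℝ | x * p = p * x ∧ x * q = q * x} := by
      rw [hcentral]; exact hq𝒜
    exact hq'.1
  have hn0 : 2 ≤ (n : ℤ) := by exact_mod_cast hn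
  -- the values of g on the relevant range lie in 𝒜
  have hgA : ∀ t : ℤ, 1 - (n:ℤ) ≤ t → t ≤ (n:ℤ) - 1 → g t ∈ 𝒜 := by
    intro t h1 h2
    rcases le_or_gt 0 t with ht | ht
    · have hlt : t.toNat < n := by omega
      have := hmemA ⟨t.toNat, hlt⟩ ⟨0, by omega⟩
      rw [hg] at this
      have e : ((⟨t.toNat, hlt⟩ : Fin n) : ℤ) - ((⟨0, by omega⟩ : Fin n) : ℤ) = t := by
        simp; omega
      rwa [e] at this
    · have hlt : (-t).toNat < n := by omega
      have := hmemA ⟨0, by omega⟩ ⟨(-t).toNat, hlt⟩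
      rw [hg] at this
      have e : ((⟨0, by omega⟩ : Fin n) : ℤ) - ((⟨(-t).toNat, hlt⟩ : Fin n) : ℤ) = t := by
        simp; omega
      rwa [e] at this
  -- key identity
  have key : ∀ t : ℤ, 1 ≤ t → t ≤ (n:ℤ) - 1 → p * g (t - n) = q * g t := by
    intro t ht1 ht2
    set kZ : ℤ := (n:ℤ) - t with hkZ
    have hk1 : 1 ≤ kZ := by omega
    have hk2 : kZ ≤ (n:ℤ) - 1 := by omega
    set w : ℤ → Quaternion ℝ :=
      fun x => if x = kZ then p else if x = kZ - n then q else 0 with hw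
    set W : Matrix (Fin n) (Fin n) (Quaternion ℝ) :=
      Matrix.of (fun r s => w ((r:ℤ) - (s:ℤ))) with hWdef
    have wp : w kZ = p := by
      show (if kZ = kZ then p else if kZ = kZ - (n:ℤ) then q else 0) = p
      rw [if_pos rfl]
    have wq : w (kZ - n) = q := by
      show (if kZ - (n:ℤ) = kZ then p else if kZ - (n:ℤ) = kZ - (n:ℤ) then q else 0) = q
      rw [if_neg (by omega), if_pos rfl]
    have wz : ∀ x : ℤ, x ≠ kZ → x ≠ kZ - n → w x = 0 := by
      intro x h1 h2
      show (if x = kZ then p else if x = kZ - (n:ℤ) then q else 0) = 0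
      rw [if_neg h1, if_neg h2]
    have hWmemGpq : W ∈ Gpq n 𝒜 p q := by
      refine ⟨w, fun r s => rfl, ?_, ?_⟩
      · intro x
        by_cases h1 : x = kZ
        · rw [h1, wp]; exact hp𝒜
        · by_cases h2 : x = kZ - n
          · rw [h2, wq]; exact hq𝒜
          · rw [wz x h1 h2]; exact Subalgebra.zero_mem 𝒜
      · intro x hx1 hx2
        by_cases h1 : x = kZ
        · rw [h1, wq, wp]
          exact hcomm.symm
        · rw [wz x h1 (by omega), wz (x - n) (by omega) (by omega), mul_zero, mul_zero]
    have hWG : W * G ∈ 𝒢 := h𝒢mul W (hsub hWmemGpq) G hG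
    obtain ⟨⟨h, hh⟩, -⟩ := h𝒢toep _ hWG
    have hkn : kZ.toNat < n := by omega
    have htn : t.toNat < n := by omega
    set rk : Fin n := ⟨kZ.toNat, hkn⟩ with hrk
    set j0 : Fin n := ⟨t.toNat, htn⟩ with hj0
    set r0 : Fin n := ⟨0, by omega⟩ with hr0
    have hrkZ : ((rk : ℕ) : ℤ) = kZ := by show ((kZ.toNat : ℕ) : ℤ) = kZ; omega
    have hj0Z : ((j0 : ℕ) : ℤ) = t := by show ((t.toNat : ℕ) : ℤ) = t; omega
    have hr0Z : ((r0 : ℕ) : ℤ) = 0 := by show (((0:ℕ) : ℕ) : ℤ) = 0; simp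
    have e1 : (W * G) rk rk = p * g (t - n) := by
      rw [Matrix.mul_apply]
      rw [Finset.sum_eq_single r0]
      · have hW0 : W rk r0 = p := by
          show w (((rk : ℕ) : ℤ) - ((r0 : ℕ) : ℤ)) = p
          rw [hrkZ, hr0Z]
          simp [hw]
        have hG0 : G r0 rk = g (t - n) := by
          have earg : ((r0 : ℕ) : ℤ) - ((rk : ℕ) : ℤ) = t - n := by
            rw [hrkZ, hr0Z]; omega
          rw [hg, earg]
        rw [hW0, hG0]
      · intro b _ hb
        have hbZ : ((b : ℕ) : ℤ) ≠ 0 := by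
          intro hc
          exact hb (Fin.ext (by omega))
        have hbub : ((b : ℕ) : ℤ) < n := by exact_mod_cast b.isLt
        have hblb : 0 ≤ ((b : ℕ) : ℤ) := Int.ofNat_nonneg _
        have hWb : W rk b = 0 := by
          show w (((rk : ℕ) : ℤ) - ((b : ℕ) : ℤ)) = 0
          rw [hrkZ]
          exact wz _ (by omega) (by omega)
        rw [hWb, zero_mul]
      · intro hc; exact absurd (Finset.mem_univ r0) hc
    have e2 : (W * G) r0 r0 = q * g t := by
      rw [Matrix.mul_apply]
      rw [Finset.sum_eq_single j0]
      · have hW0 : W r0 j0 = q := by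
          show w (((r0 : ℕ) : ℤ) - ((j0 : ℕ) : ℤ)) = q
          rw [hr0Z, hj0Z]
          have e : (0 : ℤ) - t = kZ - n := by omega
          rw [e, wq]
        have hG0 : G j0 r0 = g t := by
          have earg : ((j0 : ℕ) : ℤ) - ((r0 : ℕ) : ℤ) = t := by
            rw [hr0Z, hj0Z]; omega
          rw [hg, earg]
        rw [hW0, hG0]
      · intro b _ hb
        have hbZ : ((b : ℕ) : ℤ) ≠ t := by
          intro hc
          exact hb (Fin.ext (by omega))
        have hbub : ((b : ℕ) : ℤ) < n := by exact_mod_cast b.isLt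
        have hblb : 0 ≤ ((b : ℕ) : ℤ) := Int.ofNat_nonneg _
        have hWb : W r0 b = 0 := by
          show w (((r0 : ℕ) : ℤ) - ((b : ℕ) : ℤ)) = 0
          rw [hr0Z]
          exact wz _ (by omega) (by omega)
        rw [hWb, zero_mul]
      · intro hc; exact absurd (Finset.mem_univ j0) hc
    have toep : (W * G) rk rk = (W * G) r0 r0 := by
      rw [hh rk rk, hh r0 r0, sub_self, sub_self]
    rw [e1, e2] at toep
    exact toep
  -- assemble membership in Gpq
  refine ⟨fun t => if 1 - (n:ℤ) ≤ t ∧ t ≤ (n:ℤ) - 1 then g t else 0, ?_, ?_, ?_⟩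
  · intro r s
    have hrub : ((r : ℕ) : ℤ) < n := by exact_mod_cast r.isLt
    have hsub' : ((s : ℕ) : ℤ) < n := by exact_mod_cast s.isLt
    have hrlb : 0 ≤ ((r : ℕ) : ℤ) := Int.ofNat_nonneg _
    have hslb : 0 ≤ ((s : ℕ) : ℤ) := Int.ofNat_nonneg _
    have hc : 1 - (n:ℤ) ≤ ((r : ℕ) : ℤ) - ((s : ℕ) : ℤ) ∧
        ((r : ℕ) : ℤ) - ((s : ℕ) : ℤ) ≤ (n:ℤ) - 1 := ⟨by omega, by omega⟩
    dsimp only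
    rw [if_pos hc]
    exact hg r s
  · intro t
    dsimp only
    by_cases hr : 1 - (n:ℤ) ≤ t ∧ t ≤ (n:ℤ) - 1
    · rw [if_pos hr]; exact hgA t hr.1 hr.2
    · rw [if_neg hr]; exact Subalgebra.zero_mem 𝒜
  · intro t ht1 ht2
    have hc1 : 1 - (n:ℤ) ≤ t - (n:ℤ) ∧ t - (n:ℤ) ≤ (n:ℤ) - 1 := ⟨by omega, by omega⟩
    have hc2 : 1 - (n:ℤ) ≤ t ∧ t ≤ (n:ℤ) - 1 := ⟨by omega, by omega⟩
    dsimp only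
    rw [if_pos hc1, if_pos hc2]
    exact key t ht1 ht2
end

section
/- Let n ≥ 1, let 𝒜 be a subalgebra of the ℝ-algebra ℍ, and let p q : ℍ satisfy p * x = x * p and q * x = q * x * 1 = x * q for all x ∈ 𝒜, with ¬(p = 0 ∧ q = 0). Suppose there exists α : ℍ with α * p = p * α and α * q = q * α but α ∉ 𝒜. Let ℬ be the centralizer subalgebra {x : ℍ | x * p = p * x ∧ x * q = q * x} (a subalgebra of ℍ containing 𝒜). Then 𝒢_{p,q}[𝒜] is strictly contained in 𝒢_{p,q}[ℬ]: 𝒢_{p,q}[𝒜] ⊆ 𝒢_{p,q}[ℬ] and 𝒢_{p,q}[𝒜] ≠ 𝒢_{p,q}[ℬ]. (In particular, if {x : ℍ | x * p = p * x ∧ x * q = q * x} ≠ ↑𝒜, then 𝒢_{p,q}[𝒜] is not a maximal left algebra of quaternion Toeplitz matrices.) -/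
theorem Gpq_mono {n : ℕ} {𝒜 ℬ : Subalgebra ℝ (Quaternion ℝ)} (h : 𝒜 ≤ ℬ) (p q : Quaternion ℝ) :
    Gpq n 𝒜 p q ⊆ Gpq n ℬ p q :=
  fun _ ⟨a, ha, ha𝒜, hapq⟩ => ⟨a, ha, fun t => h (ha𝒜 t), hapq⟩

theorem diagonal_const_mem_Gpq {n : ℕ} {𝒜 : Subalgebra ℝ (Quaternion ℝ)} {x : Quaternion ℝ}
    (hx : x ∈ 𝒜) (p q : Quaternion ℝ) :
    Matrix.diagonal (fun _ => x) ∈ Gpq n 𝒜 p q := by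
  refine ⟨Pi.single 0 x, fun r s => ?_, fun t => ?_, fun t ht₁ ht₂ => ?_⟩
  · have : r = s ↔ (r : ℤ) - s = 0 := by rw [Fin.ext_iff]; omega
    simp only [Matrix.diagonal_apply, Pi.single_apply, this]
  · by_cases ht : t = 0
    · simpa [ht] using hx
    · simp [ht]
  · have ht₀ : t ≠ 0 := by omega
    have htn : t - n ≠ 0 := by omega
    simp [ht₀, htn]

theorem mem_of_diagonal_const_mem_Gpq {n : ℕ} (hn : 1 ≤ n) {𝒜 : Subalgebra ℝ (Quaternion ℝ)}
    {x p q : Quaternion ℝ} (h : Matrix.diagonal (fun _ => x) ∈ Gpq n 𝒜 p q) : x ∈ 𝒜 := by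
  obtain ⟨a, ha, ha𝒜, -⟩ := h
  have hx : x = a 0 := by simpa using ha ⟨0, hn⟩ ⟨0, hn⟩
  exact hx ▸ ha𝒜 0

theorem Gpq_not_maximal_of_strict_centralizer_general (n : ℕ) (hn : 1 ≤ n)
    (𝒜 : Subalgebra ℝ (Quaternion ℝ)) (p q : Quaternion ℝ)
    (hp : ∀ x ∈ 𝒜, p * x = x * p) (hq : ∀ x ∈ 𝒜, q * x = x * q)
    (α : Quaternion ℝ) (hαp : α * p = p * α) (hαq : α * q = q * α)
    (hα𝒜 : α ∉ 𝒜)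
    (ℬ : Subalgebra ℝ (Quaternion ℝ))
    (hℬ : (ℬ : Set (Quaternion ℝ)) =
      {x : Quaternion ℝ | x * p = p * x ∧ x * q = q * x}) :
    Gpq n 𝒜 p q ⊆ Gpq n ℬ p q ∧ Gpq n 𝒜 p q ≠ Gpq n ℬ p q := by
  have h𝒜ℬ : 𝒜 ≤ ℬ := fun x hx =>
    show x ∈ (ℬ : Set (Quaternion ℝ)) from hℬ ▸ ⟨(hp x hx).symm, (hq x hx).symm⟩
  have hαℬ : α ∈ ℬ := show α ∈ (ℬ : Set (Quaternion ℝ)) from hℬ ▸ ⟨hαp, hαq⟩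
  refine ⟨Gpq_mono h𝒜ℬ p q, fun heq => hα𝒜 ?_⟩
  exact mem_of_diagonal_const_mem_Gpq hn (heq ▸ diagonal_const_mem_Gpq hαℬ p q)

theorem Gpq_not_maximal_of_strict_centralizer (n : ℕ) (hn : 1 ≤ n)
    (𝒜 : Subalgebra ℝ (Quaternion ℝ)) (p q : Quaternion ℝ)
    (hp : ∀ x ∈ 𝒜, p * x = x * p) (hq : ∀ x ∈ 𝒜, q * x = x * q)
    (hpq : ¬ (p = 0 ∧ q = 0))
    (α : Quaternion ℝ) (hαp : α * p = p * α) (hαq : α * q = q * α)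
    (hα𝒜 : α ∉ 𝒜)
    (ℬ : Subalgebra ℝ (Quaternion ℝ))
    (hℬ : (ℬ : Set (Quaternion ℝ)) =
      {x : Quaternion ℝ | x * p = p * x ∧ x * q = q * x}) :
    Gpq n 𝒜 p q ⊆ Gpq n ℬ p q ∧ Gpq n 𝒜 p q ≠ Gpq n ℬ p q :=
  Gpq_not_maximal_of_strict_centralizer_general n hn 𝒜 p q hp hq α hαp hαq hα𝒜 ℬ hℬ
end
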